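/- arXiv:0709.0800 — 5 statements merged into one kernel-verified Lean document; each statement's English description precedes it below -/
import Mathlib

section
/- Let p be a prime and let G be a group of order p⁵ admitting a Kantor family (F, F*) of order (p², p). Then no member of F is a normal subgroup of G. In particular, G is non-abelian. -/
open scoped Pointwise

/-- A Kantor family of order `(s,t)` for a group `G`:
families `A i` (of order `s`) and `Astar i` (of order `st`), `i : Fin (t+1)`,
with `A i ≤ Astar i`, the tangency condition `A i ⊓ Astar j = ⊥` for `i ≠ j`,
and the triple condition `A i * A j ∩ A k = 1` for pairwise distinct `i, j, k`. -/
def IsKantorFamily {G : Type*} [Group G] (s t : ℕ)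
    (A Astar : Fin (t + 1) → Subgroup G) : Prop :=
  (∀ i, Nat.card (A i) = s) ∧
  (∀ i, Nat.card (Astar i) = s * t) ∧
  (∀ i, A i ≤ Astar i) ∧
  (∀ i j, i ≠ j → A i ⊓ Astar j = ⊥) ∧
  (∀ i j k, i ≠ j → j ≠ k → i ≠ k →
    ∀ g ∈ (A i : Set G) * (A j : Set G), g ∈ A k → g = 1)

namespace Subgroup

variable {G : Type*} [Group G] {H K : Subgroup G}

theorem relIndex_eq_card_of_inf_eq_bot (h : H ⊓ K = ⊥) : H.relIndex K = Nat.card K := by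
  rw [← inf_relIndex_right, h, relIndex_bot_left]

theorem card_mul_card_le_of_inf_eq_bot [Finite G] (h : H ⊓ K = ⊥) :
    Nat.card H * Nat.card K ≤ Nat.card G := by
  calc Nat.card H * Nat.card K = Nat.card H * H.relIndex K := by
        rw [relIndex_eq_card_of_inf_eq_bot h]
    _ ≤ Nat.card H * H.index := by
        gcongr
        rw [← relIndex_top_right]
        exact relIndex_le_of_le_right le_top (by simpa using H.index_ne_zero_of_finite)
    _ = Nat.card G := H.card_mul_index

theorem card_sup_of_normal_of_inf_eq_bot [H.Normal] (h : H ⊓ K = ⊥) :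
    Nat.card ↥(H ⊔ K) = Nat.card H * Nat.card K := by
  rw [← relIndex_bot_left, ← relIndex_mul_relIndex ⊥ H (H ⊔ K) bot_le le_sup_left,
    relIndex_sup_left, relIndex_bot_left, relIndex_eq_card_of_inf_eq_bot h]

end Subgroup

theorem Fintype.exists_ne_ne_of_two_lt_card {α : Type*} [Fintype α] (h : 2 < Fintype.card α)
    (i : α) :
    ∃ j k : α, i ≠ j ∧ i ≠ k ∧ j ≠ k := by
  classical
  have : 1 < ({i}ᶜ : Finset α).card := by rw [Finset.card_compl, Finset.card_singleton]; omega
  obtain ⟨j, hj, k, hk, hjk⟩ := Finset.one_lt_card.1 this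
  simp only [Finset.mem_compl, Finset.mem_singleton] at hj hk
  exact ⟨j, k, Ne.symm hj, Ne.symm hk, hjk⟩

namespace IsKantorFamily

variable {G : Type*} [Group G] {s t : ℕ} {A Astar : Fin (t + 1) → Subgroup G}

theorem inf_eq_bot (hKF : IsKantorFamily s t A Astar) {i j : Fin (t + 1)} (hij : i ≠ j) :
    A i ⊓ A j = ⊥ :=
  le_bot_iff.mp <| (inf_le_inf_left _ (hKF.2.2.1 j)).trans (hKF.2.2.2.1 i j hij).le

theorem inf_sup_eq_bot_of_normal (hKF : IsKantorFamily s t A Astar) {i j k : Fin (t + 1)}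
    [(A i).Normal] (hij : i ≠ j) (hik : i ≠ k) (hjk : j ≠ k) : A k ⊓ (A i ⊔ A j) = ⊥ := by
  refine (Subgroup.eq_bot_iff_forall _).mpr fun g hg => ?_
  have hg_mul : g ∈ (A i : Set G) * (A j : Set G) := by
    rw [← Subgroup.normal_mul]
    exact hg.2
  exact hKF.2.2.2.2 i j k hij hjk hik g hg_mul hg.1

/-- Were `A i` normal, `A i * A j` would be a subgroup of order `s²` meeting `A k` trivially. -/
theorem not_normal [Finite G] (hKF : IsKantorFamily s t A Astar) (ht : 2 ≤ t)
    (hG : Nat.card G < s ^ 3) (i : Fin (t + 1)) : ¬ (A i).Normal := by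
  intro hN
  obtain ⟨j, k, hij, hik, hjk⟩ :=
    Fintype.exists_ne_ne_of_two_lt_card (by rw [Fintype.card_fin]; omega) i
  have hle := Subgroup.card_mul_card_le_of_inf_eq_bot (hKF.inf_sup_eq_bot_of_normal hij hik hjk)
  rw [Subgroup.card_sup_of_normal_of_inf_eq_bot (hKF.inf_eq_bot hij), hKF.1 i, hKF.1 j,
    hKF.1 k] at hle
  exact absurd hG (not_lt.mpr (le_of_eq_of_le (by ring) hle))

end IsKantorFamily

theorem stmt3 {G : Type*} [Group G] (p : ℕ) (hp : p.Prime)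
    (hG : Nat.card G = p ^ 5)
    (A Astar : Fin (p + 1) → Subgroup G)
    (hKF : IsKantorFamily (p ^ 2) p A Astar) :
    (∀ i, ¬ (A i).Normal) ∧ ∃ a b : G, a * b ≠ b * a := by
  have : Finite G := Nat.finite_of_card_ne_zero (by rw [hG]; exact pow_ne_zero 5 hp.ne_zero)
  have hG_lt : Nat.card G < (p ^ 2) ^ 3 := by
    rw [hG, ← pow_mul]
    exact Nat.pow_lt_pow_right hp.one_lt (by norm_num)
  have hnormal := hKF.not_normal hp.two_le hG_lt
  refine ⟨hnormal, ?_⟩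
  by_contra! hcomm
  exact hnormal 0 ⟨fun n hn g => by rwa [hcomm g n, mul_inv_cancel_right]⟩
end

section
/- Let p be an odd prime and let G be a group of order p⁵ of nilpotency class 2 with G/G' ≅ C_p × C_p × C_p and G' ≅ C_p × C_p, given by generators x, y, z with [y,z] = 1 and G' = ⟨[x,y],[x,z]⟩. Then G does not admit a Kantor family of order (p², p). -/
/-!
Let `K = G'`, which is central of order `p²` and exponent `p`, and let `C = ⟨y, z, K⟩`.
Then `C` is abelian of index `p`, and `c ↦ ⁅x, c⁆` maps `C` onto `K` with kernel `K`; so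
every `c ∈ C \ K` has centralizer exactly `C`. An abelian subgroup `B` of order `p²` with
`B ∩ K = 1` meets `C` (as `p² > [G : C]`) in some `c ∉ K`, hence `B ≤ C_G(c) = C`.

In a Kantor family, two members `A i, A j` inside `C` would give `A i A j = C`, so a third member
would meet `C` trivially, impossible as `|A k| = p² > [G : C]`. Two members meeting `K`
nontrivially contain cyclic subgroups with `⟨a⟩⟨b⟩ = K`, so every other member meets `K`
trivially, i.e. lies in `C`. Among four members one of these two situations occurs.
-/

open scoped Pointwise
open scoped commutatorElement

open Finset in
theorem Fintype.exists_two_or_three_not_of_four_le_card {ι : Type*} [Fintype ι]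
    (hι : 4 ≤ Fintype.card ι) (P : ι → Prop) :
    (∃ i j k, i ≠ j ∧ j ≠ k ∧ i ≠ k ∧ P i ∧ P j) ∨
      ∃ i j k, i ≠ j ∧ j ≠ k ∧ i ≠ k ∧ ¬P i ∧ ¬P j ∧ ¬P k := by
  classical
  have hι' : 2 < #(univ : Finset ι) := by rw [card_univ]; omega
  by_cases hP : 1 < #{i | P i}
  · obtain ⟨i, hi, j, hj, hij⟩ := Finset.one_lt_card.mp hP
    obtain ⟨k, -, hk⟩ := exists_mem_notMem_of_card_lt_card (card_le_two.trans_lt hι')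
    simp only [mem_insert, mem_singleton, not_or] at hk
    simp only [mem_filter, mem_univ, true_and] at hi hj
    exact Or.inl ⟨i, j, k, hij, Ne.symm hk.2, Ne.symm hk.1, hi, hj⟩
  · have h3 : 2 < #{i | ¬P i} := by
      have := card_filter_add_card_filter_not (s := univ) (fun i => P i)
      rw [card_univ] at this
      omega
    obtain ⟨i, hi, j, hj, k, hk, hij, hik, hjk⟩ := Finset.two_lt_card.mp h3
    simp only [mem_filter, mem_univ, true_and] at hi hj hk
    exact Or.inr ⟨i, j, k, hij, hjk, hik, hi, hj, hk⟩

theorem commutator_le_center_of_nilpotencyClass_le_two {G : Type*} [Group G]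
    [Group.IsNilpotent G] (h : Group.nilpotencyClass G ≤ 2) :
    commutator G ≤ Subgroup.center G := by
  have h2 : (⊤ : Subgroup G).lowerCentralSeries 2 = ⊥ :=
    Subgroup.lowerCentralSeries_eq_bot_iff_nilpotencyClass_le.mpr h
  rw [Subgroup.lowerCentralSeries_succ, Subgroup.top_lowerCentralSeries_one,
    Subgroup.commutator_eq_bot_iff_le_centralizer, Subgroup.coe_top,
    Subgroup.centralizer_univ] at h2
  exact h2

open Subgroup

namespace Subgroup

variable {G : Type*} [Group G]

theorem inf_ne_bot_of_index_lt_card {B C : Subgroup G} [C.FiniteIndex]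
    (h : C.index < Nat.card B) : B ⊓ C ≠ ⊥ := by
  intro hBC
  have hrel : C.relIndex B = Nat.card B := by
    rw [← inf_relIndex_left, hBC, relIndex_bot_left]
  have := relIndex_le_of_le_right (H := C) (le_top : B ≤ ⊤)
    (by rw [relIndex_top_right]; exact FiniteIndex.index_ne_zero)
  rw [hrel, relIndex_top_right] at this
  omega

theorem eq_of_le_of_index_prime {H K : Subgroup G} (hp : H.index.Prime) (hHK : H ≤ K)
    (hK : K ≠ ⊤) : K = H := by
  have hmul := relIndex_mul_index hHK
  rcases Nat.prime_mul_iff.mp (hmul ▸ hp) with ⟨-, h1⟩ | ⟨-, h1⟩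
  · exact absurd (index_eq_one.mp h1) hK
  · exact le_antisymm (relIndex_eq_one.mp h1) hHK

theorem index_dvd_of_pow_mem {H : Subgroup G} [H.Normal] {x : G} {s : Set G}
    (hgen : closure (insert x s) = ⊤) (hs : s ⊆ H) {n : ℕ} (hx : x ^ n ∈ H) :
    H.index ∣ n := by
  have htop : zpowers (x : G ⧸ H) = ⊤ := by
    rw [← map_comap_eq_self_of_surjective (QuotientGroup.mk'_surjective H) (zpowers _),
      eq_top_iff, ← map_top_of_surjective _ (QuotientGroup.mk'_surjective H), ← hgen]
    refine map_mono ((closure_le _).mpr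
      (Set.insert_subset_iff.mpr ⟨mem_zpowers _, fun g hg => ?_⟩))
    simp [(QuotientGroup.eq_one_iff g).mpr (hs hg)]
  rw [index_eq_card, ← card_top, ← htop, Nat.card_zpowers]
  exact orderOf_dvd_of_pow_eq_one
    (by rw [← QuotientGroup.mk_pow, QuotientGroup.eq_one_iff]; exact hx)

theorem coe_subset_mul_of_card_mul_eq {U V N : Subgroup G} [Finite N] (hUV : Disjoint U V)
    (hU : U ≤ N) (hV : V ≤ N) (hcard : Nat.card U * Nat.card V = Nat.card N) :
    (N : Set G) ⊆ U * V := by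
  let f : U × V → N := fun uv => ⟨uv.1 * uv.2, N.mul_mem (hU uv.1.2) (hV uv.2.2)⟩
  have hf : Function.Bijective f :=
    Function.Injective.bijective_of_nat_card_le
      (fun a b h => mul_injective_of_disjoint hUV (congrArg Subtype.val h))
      (by rw [Nat.card_prod, hcard])
  intro n hn
  obtain ⟨⟨u, v⟩, huv⟩ := hf.2 ⟨n, hn⟩
  exact ⟨u, u.2, v, v.2, congrArg Subtype.val huv⟩

end Subgroup

namespace IsKantorFamily

variable {G : Type*} [Group G] {s t : ℕ} {A Astar : Fin (t + 1) → Subgroup G}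

theorem card_eq (hK : IsKantorFamily s t A Astar) (i : Fin (t + 1)) : Nat.card (A i) = s :=
  hK.1 i

theorem inf_eq_bot_of_card_mul_eq (hK : IsKantorFamily s t A Astar) {i j k : Fin (t + 1)}
    (hij : i ≠ j) (hjk : j ≠ k) (hik : i ≠ k) {U V N : Subgroup G} [Finite N]
    (hU : U ≤ A i ⊓ N) (hV : V ≤ A j ⊓ N) (hcard : Nat.card U * Nat.card V = Nat.card N) :
    A k ⊓ N = ⊥ := by
  obtain ⟨-, -, hle, htangent, htriple⟩ := hK
  have hUV : Disjoint U V := by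
    rw [disjoint_iff, ← le_bot_iff, ← htangent i j hij]
    exact inf_le_inf (hU.trans inf_le_left) ((hV.trans inf_le_left).trans (hle j))
  refine eq_bot_iff.mpr fun g ⟨hgk, hgN⟩ => htriple i j k hij hjk hik g ?_ hgk
  exact Set.mul_subset_mul (SetLike.coe_subset_coe.mpr (hU.trans inf_le_left))
    (SetLike.coe_subset_coe.mpr (hV.trans inf_le_left))
    (coe_subset_mul_of_card_mul_eq hUV (hU.trans inf_le_right) (hV.trans inf_le_right) hcard hgN)

theorem le_index_of_le_of_le [Finite G] (hK : IsKantorFamily s t A Astar) {i j k : Fin (t + 1)}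
    (hij : i ≠ j) (hjk : j ≠ k) (hik : i ≠ k) {N : Subgroup G} (hN : Nat.card N = s ^ 2)
    (hi : A i ≤ N) (hj : A j ≤ N) : s ≤ N.index := by
  by_contra! hlt
  refine inf_ne_bot_of_index_lt_card (B := A k) (hK.card_eq k ▸ hlt) ?_
  exact hK.inf_eq_bot_of_card_mul_eq hij hjk hik (le_inf le_rfl hi) (le_inf le_rfl hj)
    (by rw [hK.card_eq, hK.card_eq, hN, sq])

theorem inf_eq_bot_of_inf_ne_bot (hK : IsKantorFamily s t A Astar)
    {i j k : Fin (t + 1)} (hij : i ≠ j) (hjk : j ≠ k) (hik : i ≠ k) {p : ℕ} [Fact p.Prime]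
    {N : Subgroup G} [Finite N] (hN : Nat.card N = p ^ 2) (hexp : ∀ g ∈ N, g ^ p = 1)
    (hi : A i ⊓ N ≠ ⊥) (hj : A j ⊓ N ≠ ⊥) : A k ⊓ N = ⊥ := by
  obtain ⟨a, ha, ha1⟩ := (bot_or_exists_ne_one _).resolve_left hi
  obtain ⟨b, hb, hb1⟩ := (bot_or_exists_ne_one _).resolve_left hj
  refine hK.inf_eq_bot_of_card_mul_eq hij hjk hik (zpowers_le.mpr ha) (zpowers_le.mpr hb) ?_
  rw [Nat.card_zpowers, Nat.card_zpowers, orderOf_eq_prime (hexp a ha.2) ha1,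
    orderOf_eq_prime (hexp b hb.2) hb1, hN, sq]

end IsKantorFamily

section CommutatorSupClosurePair

variable {G : Type*} [Group G]

def commutatorElementHom (hc : commutator G ≤ center G) (g : G) : G →* G where
  toFun c := ⁅g, c⁆
  map_one' := commutatorElement_one_right g
  map_mul' a b := by
    rw [commutatorElement_mul_right_eq_mul_conj, mul_assoc ⁅g, a⁆ a,
      mem_center_iff.mp (hc (commutator_mem_commutator (mem_top g) (mem_top b))) a]
    group

def commutatorSupClosurePair (y z : G) : Subgroup G := commutator G ⊔ closure {y, z}

variable {x y z : G}

theorem commutator_le_commutatorSupClosurePair : commutator G ≤ commutatorSupClosurePair y z :=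
  le_sup_left

theorem left_mem_commutatorSupClosurePair : y ∈ commutatorSupClosurePair y z :=
  mem_sup_right (subset_closure (by simp))

theorem right_mem_commutatorSupClosurePair : z ∈ commutatorSupClosurePair y z :=
  mem_sup_right (subset_closure (by simp))

instance : (commutatorSupClosurePair y z).Normal :=
  Normal.of_commutator_le G commutator_le_commutatorSupClosurePair

theorem isMulCommutative_commutatorSupClosurePair (hc : commutator G ≤ center G)
    (hyz : ⁅y, z⁆ = 1) : IsMulCommutative (commutatorSupClosurePair y z) := by
  rw [commutatorSupClosurePair, ← closure_eq (commutator G), ← Subgroup.closure_union]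
  refine isMulCommutative_closure fun a ha b hb => ?_
  rcases ha with ha | ha
  · exact (mem_center_iff.mp (hc ha) b).symm
  rcases hb with hb | hb
  · exact mem_center_iff.mp (hc hb) a
  have hyz' := commutatorElement_eq_one_iff_mul_comm.mp hyz
  rcases ha with rfl | rfl <;> rcases hb with rfl | rfl
  exacts [rfl, hyz', hyz'.symm, rfl]

theorem index_commutatorSupClosurePair {p : ℕ} [hp : Fact p.Prime]
    (hc : commutator G ≤ center G) (hyz : ⁅y, z⁆ = 1) (hgen : closure {x, y, z} = ⊤)
    (hK : commutator G ≠ ⊥)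
    (hquot : ∀ g : G ⧸ commutator G, g ^ p = 1) : (commutatorSupClosurePair y z).index = p := by
  have hxp : x ^ p ∈ commutatorSupClosurePair y z :=
    commutator_le_commutatorSupClosurePair ((QuotientGroup.eq_one_iff _).mp (hquot x))
  have hyzC : {y, z} ⊆ (commutatorSupClosurePair y z : Set G) :=
    Set.pair_subset left_mem_commutatorSupClosurePair right_mem_commutatorSupClosurePair
  refine ((Nat.dvd_prime hp.out).mp (index_dvd_of_pow_mem hgen hyzC hxp)).resolve_left fun h1 => ?_
  have := isMulCommutative_commutatorSupClosurePair hc hyz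
  have htop := index_eq_one.mp h1
  refine hK (eq_bot_iff.mpr (commutator_le.mpr fun a _ b _ => ?_))
  exact commutatorElement_eq_one_iff_mul_comm.mpr
    (setLike_mul_comm (htop ▸ mem_top a : a ∈ _) (htop ▸ mem_top b : b ∈ _))

theorem mem_commutator_of_commutatorElement_eq_one [Finite G] (hc : commutator G ≤ center G)
    (hG' : commutator G = closure {⁅x, y⁆, ⁅x, z⁆})
    (hcard : Nat.card (commutatorSupClosurePair y z) = Nat.card (commutator G) ^ 2) {c : G}
    (hcC : c ∈ commutatorSupClosurePair y z) (hxc : ⁅x, c⁆ = 1) : c ∈ commutator G := by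
  set C := commutatorSupClosurePair y z
  set f := commutatorElementHom hc x
  have hmap : C.map f = commutator G := by
    refine le_antisymm (map_le_iff_le_comap.mpr fun g _ =>
      commutator_mem_commutator (mem_top x) (mem_top g)) ?_
    rw [hG', closure_le]
    exact Set.pair_subset ⟨y, left_mem_commutatorSupClosurePair, rfl⟩
      ⟨z, right_mem_commutatorSupClosurePair, rfl⟩
  have hle : commutator G ≤ C ⊓ f.ker := le_inf commutator_le_commutatorSupClosurePair
    fun k hk => commutatorElement_eq_one_iff_mul_comm.mpr (mem_center_iff.mp (hc hk) x)
  -- `|C ⊓ ker f| · [C : C ⊓ ker f] = |C|`, and `[C : C ⊓ ker f] = |f(C)| = |K|`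
  have hcard_ker : Nat.card (C ⊓ f.ker : Subgroup G) * Nat.card (commutator G) =
      Nat.card (commutator G) * Nat.card (commutator G) := by
    rw [← sq, ← hcard, ← hmap, ← relIndex_ker, ← inf_relIndex_left, ← relIndex_bot_left,
      ← relIndex_bot_left, relIndex_mul_relIndex _ _ _ bot_le inf_le_left]
  have heq := eq_of_le_of_card_ge hle
    (Nat.eq_of_mul_eq_mul_right Nat.card_pos hcard_ker).le
  exact heq ▸ ⟨hcC, hxc⟩

theorem centralizer_eq_commutatorSupClosurePair [Finite G] (hc : commutator G ≤ center G)
    (hyz : ⁅y, z⁆ = 1) (hG' : commutator G = closure {⁅x, y⁆, ⁅x, z⁆})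
    (hcard : Nat.card (commutatorSupClosurePair y z) = Nat.card (commutator G) ^ 2)
    (hprime : (commutatorSupClosurePair y z).index.Prime) {c : G}
    (hcC : c ∈ commutatorSupClosurePair y z) (hcK : c ∉ commutator G) :
    centralizer {c} = commutatorSupClosurePair y z := by
  have := isMulCommutative_commutatorSupClosurePair hc hyz
  refine eq_of_le_of_index_prime hprime
    (fun g hg => mem_centralizer_singleton_iff.mpr (setLike_mul_comm hg hcC)) fun htop => hcK ?_
  refine mem_commutator_of_commutatorElement_eq_one hc hG' hcard hcC ?_
  exact commutatorElement_eq_one_iff_mul_comm.mpr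
    (mem_centralizer_singleton_iff.mp (htop ▸ mem_top x : x ∈ centralizer {c}))

theorem le_commutatorSupClosurePair [Finite G] {p : ℕ} [hp : Fact p.Prime]
    (hc : commutator G ≤ center G) (hyz : ⁅y, z⁆ = 1)
    (hG' : commutator G = closure {⁅x, y⁆, ⁅x, z⁆})
    (hcard : Nat.card (commutatorSupClosurePair y z) = Nat.card (commutator G) ^ 2)
    (hindex : (commutatorSupClosurePair y z).index = p) {B : Subgroup G}
    (hB : Nat.card B = p ^ 2) (hBK : B ⊓ commutator G = ⊥) :
    B ≤ commutatorSupClosurePair y z := by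
  have hBC := inf_ne_bot_of_index_lt_card (B := B) (C := commutatorSupClosurePair y z)
    (by rw [hindex, hB]; exact lt_self_pow₀ hp.out.one_lt one_lt_two)
  obtain ⟨c, ⟨hcB, hcC⟩, hc1⟩ := (bot_or_exists_ne_one _).resolve_left hBC
  have hcK : c ∉ commutator G := fun hcK =>
    hc1 (mem_bot.mp (hBK ▸ (⟨hcB, hcK⟩ : c ∈ B ⊓ commutator G)))
  rw [← centralizer_eq_commutatorSupClosurePair hc hyz hG' hcard (hindex ▸ hp.out) hcC hcK]
  have := IsPGroup.isMulCommutative_of_card_eq_prime_sq hB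
  exact fun g hg => mem_centralizer_singleton_iff.mpr (setLike_mul_comm hg hcB)

end CommutatorSupClosurePair

theorem stmt11 {G : Type*} [Group G] (p : ℕ) (hp : p.Prime) (hodd : Odd p)
    (hG : Nat.card G = p ^ 5) [Group.IsNilpotent G]
    (hclass : Group.nilpotencyClass G = 2)
    (hquot : ∀ g : G ⧸ commutator G, g ^ p = 1)
    (hcard : Nat.card (commutator G) = p ^ 2)
    (hexp : ∀ g ∈ commutator G, g ^ p = 1)
    (x y z : G) (hgen : Subgroup.closure {x, y, z} = ⊤) (hyz : ⁅y, z⁆ = 1)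
    (hG' : commutator G = Subgroup.closure {⁅x, y⁆, ⁅x, z⁆}) :
    ¬ ∃ A Astar : Fin (p + 1) → Subgroup G,
        IsKantorFamily (p ^ 2) p A Astar := by
  rintro ⟨A, Astar, hA⟩
  have := Fact.mk hp
  have : Finite G := Nat.finite_of_card_ne_zero (by simp [hG, hp.ne_zero])
  have hc := commutator_le_center_of_nilpotencyClass_le_two hclass.le
  have hK : commutator G ≠ ⊥ := fun h => by
    simp [h, eq_comm (a := 1), hp.ne_one] at hcard
  have hindex := index_commutatorSupClosurePair hc hyz hgen hK hquot
  have hcardC : Nat.card (commutatorSupClosurePair y z) = p ^ 4 := by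
    have := (commutatorSupClosurePair y z).card_mul_index
    rw [hindex, hG] at this
    exact Nat.eq_of_mul_eq_mul_right hp.pos (by rw [this]; ring)
  have h4 : 4 ≤ Fintype.card (Fin (p + 1)) := by
    obtain ⟨k, rfl⟩ := hodd
    have := hp.two_le
    simp only [Fintype.card_fin]
    omega
  rcases Fintype.exists_two_or_three_not_of_four_le_card h4
    (fun i => A i ⊓ commutator G = ⊥) with
    ⟨i, j, k, hij, hjk, hik, hi, hj⟩ | ⟨i, j, k, hij, hjk, hik, hi, hj, hk⟩
  · have hAC := fun l => le_commutatorSupClosurePair hc hyz hG' (by rw [hcardC, hcard]; ring)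
      hindex (hA.card_eq l)
    have := hA.le_index_of_le_of_le hij hjk hik (by rw [hcardC]; ring) (hAC i hi) (hAC j hj)
    rw [hindex] at this
    exact absurd this (not_le.mpr (lt_self_pow₀ hp.one_lt one_lt_two))
  · exact hk (hA.inf_eq_bot_of_inf_ne_bot hij hjk hik hcard hexp hi hj)
end

section
/- Let p be a prime and G a group of order p⁵ of nilpotency class 2 with G' ≅ C_p × C_p, presented by generators x, y, z with [y,z] = 1 and G' = ⟨[x,y],[x,z]⟩ central. If H is a subgroup of G of order p² with H ∩ Z(G) = 1, then there exist elements c, d ∈ Z(G) such that H = ⟨yc, zd⟩. In particular, any two such subgroups commute elementwise. -/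
open scoped commutatorElement

/-!
In class two every commutator is central, so `g ↦ ⁅h, g⁆` is a homomorphism with kernel the
centralizer of `h`. As `G = ⟨x, y, z⟩` and `⁅y, z⁆ = 1`, every `h` has an integer `α` with
`⁅h, y⁆ = ⁅x, y⁆ ^ α` and `⁅h, z⁆ = ⁅x, z⁆ ^ α`. If `p ∤ α`, the homomorphism `⁅h, ·⁆` maps onto
`G'`, so `C_G(h)` has order `p ^ 3`; but for `h ∈ H` it contains `H Z(G)`, of order
`p ^ 2 |Z(G)| ≥ p ^ 4`. Hence `H` centralizes `y` and `z`. An element centralizing `x`, `y`, `z`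
is central, so `⁅x, ·⁆` is injective on `H` and maps it onto `G'`: the preimages `e, f ∈ H` of
`⁅x, y⁆, ⁅x, z⁆` generate `H` and satisfy `y⁻¹ e, z⁻¹ f ∈ Z(G)`. Finally `K = ⟨y c, z d⟩`
centralizes `H` because `y`, `z` and `Z(G)` do.
-/

section

open Subgroup

variable {G : Type*} [Group G]

theorem commutatorElement_mem_center_of_nilpotencyClass_le_two [Group.IsNilpotent G]
    (h : Group.nilpotencyClass G ≤ 2) (g k : G) : ⁅g, k⁆ ∈ center G := by
  rw [← Subgroup.upperCentralSeries_one]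
  exact Subgroup.mem_upperCentralSeries_succ_iff.mp
    ((Subgroup.upperCentralSeries_eq_top_iff_nilpotencyClass_le.mpr h).symm ▸ mem_top g) k

def commutatorLeftHom (k : G) (hk : ∀ g : G, ⁅g, k⁆ ∈ center G) : G →* G where
  toFun g := ⁅g, k⁆
  map_one' := commutatorElement_one_left k
  map_mul' a b := by
    rw [commutatorElement_mul_left_eq_conj_mul, mem_center_iff.mp (hk b) a,
      mul_inv_cancel_right, mem_center_iff.mp (hk a)]

def commutatorRightHom (k : G) (hk : ∀ g : G, ⁅k, g⁆ ∈ center G) : G →* G where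
  toFun g := ⁅k, g⁆
  map_one' := commutatorElement_one_right k
  map_mul' a b := by
    rw [commutatorElement_mul_right_eq_mul_conj, mul_assoc _ a, mem_center_iff.mp (hk b) a,
      ← mul_assoc, mul_inv_cancel_right]

@[simp]
theorem commutatorLeftHom_apply (k : G) (hk : ∀ g : G, ⁅g, k⁆ ∈ center G) (g : G) :
    commutatorLeftHom k hk g = ⁅g, k⁆ := rfl

@[simp]
theorem commutatorRightHom_apply (k : G) (hk : ∀ g : G, ⁅k, g⁆ ∈ center G) (g : G) :
    commutatorRightHom k hk g = ⁅k, g⁆ := rfl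

theorem ker_commutatorRightHom (k : G) (hk : ∀ g : G, ⁅k, g⁆ ∈ center G) :
    (commutatorRightHom k hk).ker = centralizer {k} := by
  ext g
  simp [mem_centralizer_iff_commutator_eq_one]

theorem Subgroup.center_eq_centralizer_inf_centralizer {x : G} {s : Set G}
    (hgen : closure (insert x s) = ⊤) : center G = centralizer {x} ⊓ centralizer s := by
  ext g
  rw [← centralizer_univ, ← coe_top, ← hgen, centralizer_closure, mem_inf, mem_centralizer_iff,
    mem_centralizer_iff, mem_centralizer_iff, Set.forall_mem_insert]
  simp only [Set.mem_singleton_iff, forall_eq]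

theorem Subgroup.relIndex_eq_card_of_inf_eq_bot_s12 {H K : Subgroup G} (h : H ⊓ K = ⊥) :
    K.relIndex H = Nat.card H := by
  rw [← inf_relIndex_left, h, relIndex_bot_left]

theorem Subgroup.card_sup_of_inf_eq_bot {H K : Subgroup G} [K.Normal] (h : H ⊓ K = ⊥) :
    Nat.card ↥(H ⊔ K) = Nat.card K * Nat.card H := by
  rw [← relIndex_bot_left, ← relIndex_mul_relIndex ⊥ K (H ⊔ K) bot_le le_sup_right,
    relIndex_bot_left, relIndex_sup_right, relIndex_eq_card_of_inf_eq_bot_s12 h]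

theorem Subgroup.closure_mul_center_le_centralizer {H : Subgroup G} {y z c d : G}
    (hH : H ≤ centralizer {y, z}) (hc : c ∈ center G) (hd : d ∈ center G) :
    closure {y * c, z * d} ≤ centralizer H := by
  have hyz : ∀ w ∈ ({y, z} : Set G), w ∈ centralizer (H : Set G) :=
    fun w hw h hh => (hH hh w hw).symm
  rw [closure_le, Set.insert_subset_iff, Set.singleton_subset_iff]
  exact ⟨mul_mem (hyz y (by simp)) (center_le_centralizer _ hc),
    mul_mem (hyz z (by simp)) (center_le_centralizer _ hd)⟩

theorem MonoidHom.card_map_of_inf_ker_eq_bot {G' : Type*} [Group G'] (f : G →* G')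
    {K : Subgroup G} (h : K ⊓ f.ker = ⊥) : Nat.card (K.map f) = Nat.card K := by
  rw [← relIndex_ker, relIndex_eq_card_of_inf_eq_bot_s12 h]

theorem MonoidHom.card_mul_card_range_le_of_le_ker [Finite G] {G' : Type*} [Group G']
    (f : G →* G') {K : Subgroup G} (h : K ≤ f.ker) :
    Nat.card K * Nat.card f.range ≤ Nat.card G := by
  rw [← f.ker.card_mul_index, index_ker]
  exact Nat.mul_le_mul_right _ (card_le_of_le h)

theorem MonoidHom.mem_zpowers_of_closure_insert_eq_top {G' : Type*} [Group G'] (f : G →* G')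
    {x : G} {s : Set G} (hgen : closure (insert x s) = ⊤) (hs : ∀ w ∈ s, f w = 1) (g : G) :
    f g ∈ zpowers (f x) := by
  have : closure (insert x s) ≤ (zpowers (f x)).comap f := by
    rw [closure_le, Set.insert_subset_iff]
    exact ⟨mem_zpowers (f x), fun w hw => by simp [hs w hw]⟩
  exact this (hgen ▸ mem_top g)

theorem Subgroup.mem_of_zpow_mem_of_pow_eq_one {p : ℕ} (hp : p.Prime) {K : Subgroup G} {g : G}
    (hg : g ^ p = 1) {α : ℤ} (hα : ¬ (p : ℤ) ∣ α) (h : g ^ α ∈ K) : g ∈ K := by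
  obtain ⟨u, v, huv⟩ := (Nat.prime_iff_prime_int.mp hp).coprime_iff_not_dvd.mpr hα
  have hgα : g = (g ^ α) ^ v := by
    rw [← zpow_mul, mul_comm, ← one_mul (g ^ (v * α)), ← one_zpow u, ← hg, ← zpow_natCast,
      ← zpow_mul, ← zpow_add, mul_comm _ u, huv, zpow_one]
  exact hgα ▸ K.zpow_mem h v

variable {x y z : G}

theorem exists_zpow_eq_commutatorElement (hc : ∀ g h : G, ⁅g, h⁆ ∈ center G)
    (hgen : closure {x, y, z} = ⊤) (hyz : ⁅y, z⁆ = 1) (g : G) :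
    ∃ α : ℤ, ⁅x, y⁆ ^ α = ⁅g, y⁆ ∧ ⁅x, z⁆ ^ α = ⁅g, z⁆ := by
  set f := (commutatorLeftHom y (hc · y)).prod (commutatorLeftHom z (hc · z))
  have hf : ∀ w ∈ ({y, z} : Set G), f w = 1 := by
    simp [f, hyz, ← commutatorElement_inv y z]
  obtain ⟨α, hα⟩ := f.mem_zpowers_of_closure_insert_eq_top hgen hf g
  exact ⟨α, by simpa [f, Prod.ext_iff] using hα⟩

theorem le_centralizer_of_inf_center_eq_bot {p : ℕ} (hp : p.Prime) [Finite G]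
    (hG : Nat.card G = p ^ 5) (hc : ∀ g h : G, ⁅g, h⁆ ∈ center G)
    (hcard : Nat.card (commutator G) = p ^ 2) (hexp : ∀ g ∈ commutator G, g ^ p = 1)
    (hgen : closure {x, y, z} = ⊤) (hyz : ⁅y, z⁆ = 1)
    (hG' : commutator G = closure {⁅x, y⁆, ⁅x, z⁆})
    {H : Subgroup G} (hH : Nat.card H = p ^ 2) (hHZ : H ⊓ center G = ⊥) :
    H ≤ centralizer {y, z} := by
  have hxy : ⁅x, y⁆ ^ p = 1 := hexp _ (hG' ▸ subset_closure (by simp))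
  have hxz : ⁅x, z⁆ ^ p = 1 := hexp _ (hG' ▸ subset_closure (by simp))
  intro h hh
  obtain ⟨α, hαy, hαz⟩ := exists_zpow_eq_commutatorElement hc hgen hyz h
  by_cases hpα : (p : ℤ) ∣ α
  · obtain ⟨k, rfl⟩ := hpα
    simp only [mem_centralizer_iff_commutator_eq_one', Set.forall_mem_insert,
      Set.mem_singleton_iff, forall_eq]
    constructor
    · rw [← hαy, zpow_mul, zpow_natCast, hxy, one_zpow]
    · rw [← hαz, zpow_mul, zpow_natCast, hxz, one_zpow]
  exfalso
  set f := commutatorRightHom h (hc h)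
  have hrange : commutator G ≤ f.range := by
    rw [hG', closure_le]
    rintro _ (rfl | rfl)
    · exact mem_of_zpow_mem_of_pow_eq_one hp hxy hpα (hαy ▸ ⟨y, rfl⟩)
    · exact mem_of_zpow_mem_of_pow_eq_one hp hxz hpα (hαz ▸ ⟨z, rfl⟩)
  have hker : H ⊔ center G ≤ f.ker := by
    rw [ker_commutatorRightHom, sup_le_iff]
    refine ⟨fun k hk => ?_, center_le_centralizer _⟩
    have := Fact.mk hp
    have := IsPGroup.isMulCommutative_of_card_eq_prime_sq hH
    exact mem_centralizer_singleton_iff.mpr (setLike_mul_comm hk hh)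
  have hZ : p ^ 2 ≤ Nat.card (center G) :=
    hcard ▸ card_le_of_le (commutator_le.mpr fun g _ k _ => hc g k)
  have hbound := f.card_mul_card_range_le_of_le_ker hker
  rw [card_sup_of_inf_eq_bot hHZ, hH, hG] at hbound
  have : p ^ 2 * p ^ 2 * p ^ 2 ≤ p ^ 5 :=
    le_trans (by gcongr; exact hcard ▸ card_le_of_le hrange) hbound
  rw [← pow_add, ← pow_add] at this
  exact absurd this (not_le.mpr (Nat.pow_lt_pow_right hp.one_lt (by norm_num)))

theorem exists_eq_closure_mul_center {p : ℕ} [Finite G] (hc : ∀ g h : G, ⁅g, h⁆ ∈ center G)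
    (hcard : Nat.card (commutator G) = p ^ 2) (hgen : closure {x, y, z} = ⊤) (hyz : ⁅y, z⁆ = 1)
    (hG' : commutator G = closure {⁅x, y⁆, ⁅x, z⁆})
    {H : Subgroup G} (hH : Nat.card H = p ^ 2) (hHZ : H ⊓ center G = ⊥)
    (hHyz : H ≤ centralizer {y, z}) :
    ∃ c ∈ center G, ∃ d ∈ center G, H = closure {y * c, z * d} := by
  set f := commutatorRightHom x (hc x)
  have hcenter : center G = f.ker ⊓ centralizer {y, z} := by
    rw [ker_commutatorRightHom]
    exact center_eq_centralizer_inf_centralizer hgen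
  have hcard_map : ∀ K ≤ H, Nat.card (K.map f) = Nat.card K := fun K hK =>
    f.card_map_of_inf_ker_eq_bot <| eq_bot_iff.mpr fun g ⟨hgK, hgf⟩ =>
      hHZ ▸ ⟨hK hgK, hcenter ▸ ⟨hgf, hHyz (hK hgK)⟩⟩
  have hmap : H.map f = commutator G :=
    eq_of_le_of_card_ge (map_le_iff_le_comap.mpr fun g _ =>
      commutator_mem_commutator (mem_top x) (mem_top g)) (by rw [hcard, hcard_map H le_rfl, hH])
  have hlift : ∀ w ∈ centralizer {y, z}, ⁅x, w⁆ ∈ commutator G →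
      ∃ e ∈ H, w⁻¹ * e ∈ center G ∧ f e = ⁅x, w⁆ := by
    intro w hw hxw
    obtain ⟨e, he, hfe⟩ := hmap ▸ hxw
    refine ⟨e, he, hcenter ▸ mem_inf.mpr ⟨?_, mul_mem (inv_mem hw) (hHyz he)⟩, hfe⟩
    rw [MonoidHom.mem_ker, map_mul, map_inv, hfe, commutatorRightHom_apply, inv_mul_cancel]
  have hy : y ∈ centralizer {y, z} := by
    simp [mem_centralizer_iff_commutator_eq_one', hyz]
  have hz : z ∈ centralizer {y, z} := by
    simp [mem_centralizer_iff_commutator_eq_one', ← commutatorElement_inv y z, hyz]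
  obtain ⟨e, he, hey, hfe⟩ := hlift y hy (hG' ▸ subset_closure (by simp))
  obtain ⟨e', he', hez, hfe'⟩ := hlift z hz (hG' ▸ subset_closure (by simp))
  refine ⟨y⁻¹ * e, hey, z⁻¹ * e', hez, ?_⟩
  rw [mul_inv_cancel_left, mul_inv_cancel_left]
  have hle : closure {e, e'} ≤ H := by
    rw [closure_le, Set.insert_subset_iff, Set.singleton_subset_iff]
    exact ⟨he, he'⟩
  refine (eq_of_le_of_card_ge hle ?_).symm
  rw [← hcard_map _ hle, MonoidHom.map_closure, Set.image_pair, hfe, hfe', ← hG', hcard, hH]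

end

theorem stmt12 {G : Type*} [Group G] (p : ℕ) (hp : p.Prime)
    (hG : Nat.card G = p ^ 5) [Group.IsNilpotent G]
    (hclass : Group.nilpotencyClass G = 2)
    (hcard : Nat.card (commutator G) = p ^ 2)
    (hexp : ∀ g ∈ commutator G, g ^ p = 1)
    (x y z : G) (hgen : Subgroup.closure {x, y, z} = ⊤) (hyz : ⁅y, z⁆ = 1)
    (hG' : commutator G = Subgroup.closure {⁅x, y⁆, ⁅x, z⁆}) :
    (∀ H : Subgroup G, Nat.card H = p ^ 2 → H ⊓ Subgroup.center G = ⊥ →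
      ∃ c ∈ Subgroup.center G, ∃ d ∈ Subgroup.center G,
        H = Subgroup.closure {y * c, z * d}) ∧
    (∀ H K : Subgroup G, Nat.card H = p ^ 2 → H ⊓ Subgroup.center G = ⊥ →
      Nat.card K = p ^ 2 → K ⊓ Subgroup.center G = ⊥ →
      ∀ h ∈ H, ∀ k ∈ K, h * k = k * h) := by
  have : Finite G := Nat.finite_of_card_ne_zero (hG ▸ pow_ne_zero 5 hp.ne_zero)
  have hc := commutatorElement_mem_center_of_nilpotencyClass_le_two hclass.le
  have hcentralizer : ∀ H : Subgroup G, Nat.card H = p ^ 2 → H ⊓ Subgroup.center G = ⊥ →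
      H ≤ Subgroup.centralizer {y, z} := fun H hH hHZ =>
    le_centralizer_of_inf_center_eq_bot hp hG hc hcard hexp hgen hyz hG' hH hHZ
  have hform : ∀ H : Subgroup G, Nat.card H = p ^ 2 → H ⊓ Subgroup.center G = ⊥ →
      ∃ c ∈ Subgroup.center G, ∃ d ∈ Subgroup.center G, H = Subgroup.closure {y * c, z * d} :=
    fun H hH hHZ =>
      exists_eq_closure_mul_center hc hcard hgen hyz hG' hH hHZ (hcentralizer H hH hHZ)
  refine ⟨hform, fun H K hH hHZ hK hKZ h hh k hk => ?_⟩
  obtain ⟨c, hcZ, d, hdZ, rfl⟩ := hform K hK hKZ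
  exact Subgroup.mem_centralizer_iff.mp
    (Subgroup.closure_mul_center_le_centralizer (hcentralizer H hH hHZ) hcZ hdZ hk) h hh
end

section
/- Let p be a prime and let G be a group of order p⁵ with |G'| = p and G/G' ≅ C_p × C_p × C_{p²}. Then the center Z(G) has order p³. -/
/-!
The conjugacy class of `1 ≠ g ∈ G'` lies in `G' \ {1}`, so it has fewer than `p` elements and is
trivial: `G'` is central. Then `⁅x ^ p, y⁆ = ⁅x, y⁆ ^ p = 1`, so `x ^ p` is central for every `x`;
taking `x` over a generator of the `C_{p²}` factor gives `G' < Z(G)`, so `|G : Z(G)|` divides `p³`.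
Every centralizer has index at most `|G'| = p`, since its cosets embed into the commutators
`⁅·, g⁆`. In a `p`-group a strict inclusion of subgroups divides the index by at least `p`, so
`|G : Z(G)| = p` is impossible (`Z(G) < C(a)` forces `C(a) = G`), and so is `p³`: for `a ∉ Z(G)`
and `b ∉ C(a)`, `C(a) ∩ C(b)` has index at most `p²` and contains some `c ∉ Z(G)`, and then
`Z(G) < C(c) ∩ C(a) ∩ C(b) < C(c) ∩ C(a) < C(c)` forces `C(c) = G`.
-/

open Subgroup
open scoped commutatorElement

section
variable {G : Type*} [Group G]

theorem commutatorElement_pow_left_of_commute {x y : G} (h : Commute x ⁅x, y⁆) (n : ℕ) :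
    ⁅x ^ n, y⁆ = ⁅x, y⁆ ^ n := by
  induction n with
  | zero => simp
  | succ n ih =>
    calc ⁅x ^ (n + 1), y⁆ = x * ⁅x ^ n, y⁆ * x⁻¹ * ⁅x, y⁆ := by
          simp only [commutatorElement_def, pow_succ']; group
      _ = ⁅x, y⁆ ^ (n + 1) := by
          rw [ih, (h.pow_right n).eq, pow_succ]; group

theorem index_centralizer_le_card_commutator [Finite G] (g : G) :
    (centralizer {g}).index ≤ Nat.card (commutator G) :=
  (Nat.card_le_card_of_injective _ (quotientCentralizerEmbedding g).injective).trans
    (Nat.card_mono (Set.toFinite _) (commutator_eq_closure G ▸ subset_closure))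

theorem exists_pow_notMem_of_quotient {N : Subgroup G} [N.Normal] {q : G ⧸ N} {n : ℕ}
    (hq : q ^ n ≠ 1) : ∃ x : G, x ^ n ∉ N := by
  induction q using QuotientGroup.induction_on with
  | H x => exact ⟨x, fun hx => hq (by rwa [← QuotientGroup.mk_pow, QuotientGroup.eq_one_iff])⟩

theorem mem_centralizer_singleton_comm {a b : G} :
    a ∈ centralizer {b} ↔ b ∈ centralizer {a} := by
  simp only [mem_centralizer_singleton_iff, eq_comm]

theorem center_lt_centralizer {a : G} (ha : a ∉ center G) : center G < centralizer {a} :=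
  SetLike.lt_iff_le_and_exists.mpr
    ⟨center_le_centralizer _, a, mem_centralizer_singleton_iff.mpr rfl, ha⟩

theorem index_centralizer_eq_one_iff {a : G} : (centralizer {a}).index = 1 ↔ a ∈ center G := by
  rw [index_eq_one, centralizer_eq_top_iff_subset, Set.singleton_subset_iff, SetLike.mem_coe]

theorem mem_center_of_mul_index_centralizer_dvd {a : G} {n : ℕ} (hn : n ≠ 0)
    (h : n * (centralizer {a}).index ∣ n) : a ∈ center G :=
  index_centralizer_eq_one_iff.mp <| Nat.dvd_one.mp <|
    Nat.dvd_of_mul_dvd_mul_left (Nat.pos_of_ne_zero hn) (by rwa [mul_one])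

theorem exists_notMem_center (h : (center G).index ≠ 1) : ∃ a, a ∉ center G := by
  by_contra! hall
  exact h (index_eq_one.mpr ((eq_top_iff' _).mpr hall))

theorem pow_card_commutator_mem_center (hZ : commutator G ≤ center G) (x : G) :
    x ^ Nat.card (commutator G) ∈ center G := by
  refine mem_center_iff.mpr fun y => ?_
  have hxy : ⁅x, y⁆ ∈ commutator G := commutator_mem_commutator (mem_top x) (mem_top y)
  have h1 : ⁅x ^ Nat.card (commutator G), y⁆ = 1 := by
    rw [commutatorElement_pow_left_of_commute (mem_center_iff.mp (hZ hxy) x : Commute x ⁅x, y⁆)]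
    exact congrArg Subtype.val (pow_card_eq_one' (x := (⟨_, hxy⟩ : commutator G)))
  exact (commutatorElement_eq_one_iff_commute.mp h1).eq.symm

variable {p : ℕ} [Fact p.Prime] [Finite G] (hG : IsPGroup p G)
include hG

theorem IsPGroup.le_center_of_card_eq_prime {N : Subgroup G} [N.Normal] (hN : Nat.card N = p) :
    N ≤ center G := by
  intro g hg
  by_cases h1 : g = 1
  · exact h1 ▸ one_mem _
  have horbit : MulAction.orbit (ConjAct G) g ⊆ (N : Set G) \ {1} := by
    rintro _ ⟨c, rfl⟩
    change c • g ∈ (N : Set G) \ {1}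
    rw [Set.mem_sdiff, Set.mem_singleton_iff, ConjAct.smul_def]
    refine ⟨‹N.Normal›.conj_mem g hg _, fun h => h1 ?_⟩
    simpa using h
  have hlt : (MulAction.stabilizer (ConjAct G) g).index < p := by
    rw [MulAction.index_stabilizer]
    calc (MulAction.orbit (ConjAct G) g).ncard ≤ ((N : Set G) \ {1}).ncard :=
          Set.ncard_le_ncard horbit (Set.toFinite _)
      _ = p - 1 := by
          rw [Set.ncard_sdiff_singleton_of_mem (one_mem N), ← Nat.card_coe_set_eq,
            SetLike.coe_sort_coe, hN]
      _ < p := Nat.sub_lt (Fact.out : p.Prime).pos one_pos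
  have : Finite (ConjAct G) := ‹Finite G›
  obtain ⟨n, hn⟩ := (hG.of_equiv ConjAct.toConjAct).index (MulAction.stabilizer (ConjAct G) g)
  have hn0 : n = 0 := by
    by_contra h
    exact hlt.not_ge (hn ▸ Nat.le_self_pow h p)
  have htop : MulAction.stabilizer (ConjAct G) g = ⊤ :=
    index_eq_one.mp (by rw [hn, hn0, pow_zero])
  rw [← SetLike.mem_coe, ← ConjAct.fixedPoints_eq_center]
  exact fun c => MulAction.mem_stabilizer_iff.mp (htop ▸ mem_top c)

theorem IsPGroup.prime_mul_index_dvd_of_lt {H K : Subgroup G} (h : H < K) :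
    p * K.index ∣ H.index := by
  rw [← relIndex_mul_index h.le]
  refine mul_dvd_mul_right ?_ _
  obtain ⟨n, hn⟩ := (hG.to_subgroup K).index (H.subgroupOf K)
  have hn0 : n ≠ 0 := by
    rintro rfl
    exact h.not_ge (relIndex_eq_one.mp hn)
  exact (show p ∣ (H.subgroupOf K).index from hn ▸ dvd_pow_self p hn0)

theorem IsPGroup.index_center_ne_prime : (center G).index ≠ p := by
  intro h
  have hp := (Fact.out : p.Prime)
  obtain ⟨a, ha⟩ := exists_notMem_center (h ▸ hp.one_lt.ne')
  exact ha (mem_center_of_mul_index_centralizer_dvd hp.ne_zero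
    (h ▸ hG.prime_mul_index_dvd_of_lt (center_lt_centralizer ha)))

theorem IsPGroup.prime_pow_three_mul_index_centralizer_dvd {a b c : G}
    (hb : b ∉ centralizer {a}) (hca : c ∈ centralizer {a}) (hcb : c ∈ centralizer {b})
    (hc : c ∉ center G) : p ^ 3 * (centralizer {c}).index ∣ (center G).index := by
  have h1 : center G < centralizer {c} ⊓ centralizer {a} ⊓ centralizer {b} :=
    SetLike.lt_iff_le_and_exists.mpr
      ⟨le_inf (le_inf (center_le_centralizer _) (center_le_centralizer _))
        (center_le_centralizer _), c,
        mem_inf.mpr ⟨mem_inf.mpr ⟨mem_centralizer_singleton_iff.mpr rfl, hca⟩, hcb⟩, hc⟩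
  have h2 : centralizer {c} ⊓ centralizer {a} ⊓ centralizer {b} <
      centralizer {c} ⊓ centralizer {a} :=
    SetLike.lt_iff_le_and_exists.mpr ⟨inf_le_left, a,
      mem_inf.mpr
        ⟨mem_centralizer_singleton_comm.mp hca, mem_centralizer_singleton_iff.mpr rfl⟩,
      fun h => hb (mem_centralizer_singleton_comm.mp (mem_inf.mp h).2)⟩
  have h3 : centralizer {c} ⊓ centralizer {a} < centralizer {c} :=
    SetLike.lt_iff_le_and_exists.mpr
      ⟨inf_le_left, b, mem_centralizer_singleton_comm.mp hcb, fun h => hb (mem_inf.mp h).2⟩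
  calc p ^ 3 * (centralizer {c}).index = p * (p * (p * (centralizer {c}).index)) := by ring
    _ ∣ (center G).index :=
      (mul_dvd_mul_left p (mul_dvd_mul_left p (hG.prime_mul_index_dvd_of_lt h3) |>.trans
        (hG.prime_mul_index_dvd_of_lt h2))).trans (hG.prime_mul_index_dvd_of_lt h1)

theorem IsPGroup.index_center_ne_prime_pow_three (hC : ∀ g : G, (centralizer {g}).index ≤ p) :
    (center G).index ≠ p ^ 3 := by
  intro h
  have hp := (Fact.out : p.Prime)
  obtain ⟨a, ha⟩ := exists_notMem_center (h ▸ (Nat.one_lt_pow (by norm_num) hp.one_lt).ne')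
  obtain ⟨b, hb⟩ : ∃ b, b ∉ centralizer {a} := by
    by_contra! hall
    exact ha (index_centralizer_eq_one_iff.mp (index_eq_one.mpr ((eq_top_iff' _).mpr hall)))
  have hab : (centralizer {a} ⊓ centralizer {b}).index ≤ p ^ 2 :=
    index_inf_le.trans (sq p ▸ Nat.mul_le_mul (hC a) (hC b))
  obtain ⟨c, hca, hcb, hc⟩ :
      ∃ c ∈ centralizer {a}, c ∈ centralizer {b} ∧ c ∉ center G := by
    by_contra! hall
    have hZ : center G = centralizer {a} ⊓ centralizer {b} :=
      le_antisymm (le_inf (center_le_centralizer _) (center_le_centralizer _))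
        fun c hc => hall c (mem_inf.mp hc).1 (mem_inf.mp hc).2
    exact (Nat.pow_lt_pow_right hp.one_lt (by norm_num : 2 < 3)).not_ge (h ▸ hZ ▸ hab)
  exact hc (mem_center_of_mul_index_centralizer_dvd (pow_ne_zero 3 hp.ne_zero)
    (h ▸ hG.prime_pow_three_mul_index_centralizer_dvd hb hca hcb hc))

end

theorem ofAdd_zero_zero_one_pow_ne_one (p : ℕ) (hp : 1 < p) :
    Multiplicative.ofAdd ((0, 0, 1) : ZMod p × ZMod p × ZMod (p ^ 2)) ^ p ≠ 1 := by
  rw [← ofAdd_nsmul, Ne, ofAdd_eq_one]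
  simp only [Prod.smul_mk, smul_zero, nsmul_eq_mul, mul_one, Prod.mk_eq_zero, true_and,
    ZMod.natCast_eq_zero_iff]
  exact fun h => (Nat.le_of_dvd (by omega) h).not_gt (by nlinarith)

theorem stmt14 {G : Type*} [Group G] (p : ℕ) (hp : p.Prime)
    (hG : Nat.card G = p ^ 5) (hG' : Nat.card (commutator G) = p)
    (hiso : Nonempty ((G ⧸ commutator G) ≃*
      Multiplicative (ZMod p × ZMod p × ZMod (p ^ 2)))) :
    Nat.card (Subgroup.center G) = p ^ 3 := by
  have : Fact p.Prime := ⟨hp⟩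
  have : Finite G := Nat.finite_of_card_ne_zero (by simp [hG, hp.ne_zero])
  have hpG : IsPGroup p G := IsPGroup.of_card hG
  have hZ : commutator G ≤ center G := hpG.le_center_of_card_eq_prime hG'
  obtain ⟨e⟩ := hiso
  obtain ⟨x, hx⟩ : ∃ x : G, x ^ p ∉ commutator G :=
    exists_pow_notMem_of_quotient (q := e.symm (Multiplicative.ofAdd (0, 0, 1))) <| by
      rw [← map_pow, Ne, MulEquiv.map_eq_one_iff]
      exact ofAdd_zero_zero_one_pow_ne_one p hp.one_lt
  have hlt : commutator G < center G :=
    SetLike.lt_iff_le_and_exists.mpr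
      ⟨hZ, x ^ p, hG' ▸ pow_card_commutator_mem_center hZ x, hx⟩
  have hindex : (commutator G).index = p ^ 4 := by
    have := card_mul_index (commutator G)
    rw [hG', hG, pow_succ'] at this
    exact Nat.eq_of_mul_eq_mul_left hp.pos this
  have hdvd : p * (center G).index ∣ p * p ^ 3 :=
    pow_succ' p 3 ▸ hindex ▸ hpG.prime_mul_index_dvd_of_lt hlt
  obtain ⟨k, hk, hZk⟩ := (Nat.dvd_prime_pow hp).mp (Nat.dvd_of_mul_dvd_mul_left hp.pos hdvd)
  have hk0 : k ≠ 0 := by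
    rintro rfl
    rw [(commutator_eq_bot_iff_center_eq_top G).mpr (index_eq_one.mp hZk), card_bot] at hG'
    exact hp.one_lt.ne hG'
  have hk1 : k ≠ 1 := fun h => hpG.index_center_ne_prime (by rw [hZk, h, pow_one])
  have hk3 : k ≠ 3 := fun h => hpG.index_center_ne_prime_pow_three
    (fun g => hG' ▸ index_centralizer_le_card_commutator g) (h ▸ hZk)
  obtain rfl : k = 2 := by omega
  have := card_mul_index (center G)
  rw [hZk, hG, show 5 = 3 + 2 from rfl, pow_add] at this
  exact Nat.eq_of_mul_eq_mul_right (pow_pos hp.pos 2) this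
end

section
/- Let G be a group of order p⁵ (p an odd prime) of nilpotency class 3 that cannot be generated by 2 elements, with |G' : γ₃(G)| = |γ₃(G)| = p. Then there exist generators a, b, c of G such that [a,c] ∈ γ₃(G), [b,c] ∈ γ₃(G), and the subgroup ⟨a,b⟩ has nilpotency class 3 and order p⁴. -/
/-!
Here `(⊤ : Subgroup G).lowerCentralSeries n` is γₙ₊₁(G): index 1 is G' and index 2 is γ₃(G).

Since |G' : γ₃| = p, G' = ⟨[a, b]⟩γ₃ for any a, b with [a, b] ∉ γ₃. Modulo γ₃ the group has
class 2, so x ↦ [g, x] is a homomorphism there, and replacing a third generator c by c bᵐ aⁿ puts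
[a, c] and [b, c] into γ₃. As γ₃ is central, then [[a, b], c] = 1, and x ↦ [[a, b], x] is a
homomorphism whose image contains [G', G] = γ₃; so γ₃ is generated by [[a, b], a] and [[a, b], b],
which lie in γ₃(⟨a, b⟩). Hence ⟨a, b⟩ has class 3 and contains G', and counting along
⊥ < γ₃ < G' < ⟨a⟩G' < ⟨a, b⟩G' < G gives |⟨a, b⟩| = p⁴. Since G' lies in the Frattini subgroup,
a, b and any c outside ⟨a, b⟩G' generate G.
-/

open Subgroup

open scoped commutatorElement

section CentralCommutators

variable {G : Type*} [Group G]

theorem normal_of_le_center {N : Subgroup G} (h : N ≤ center G) : N.Normal :=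
  ⟨fun n hn g => by rwa [mem_center_iff.mp (h hn) g, mul_inv_cancel_right]⟩

theorem commutatorElement_mul_left_of_mem_center {z : G} (hz : z ∈ center G) (x y : G) :
    ⁅z * x, y⁆ = ⁅x, y⁆ := by
  rw [commutatorElement_def, commutatorElement_def, mul_inv_rev,
    mem_center_iff.mp (inv_mem hz) x⁻¹, mul_assoc z x y, ← mem_center_iff.mp hz (x * y)]
  group

theorem commutatorElement_mul_right_of_mem_center {z : G} (hz : z ∈ center G) (x y : G) :
    ⁅x, z * y⁆ = ⁅x, y⁆ := by
  rw [← commutatorElement_inv, commutatorElement_mul_left_of_mem_center hz, commutatorElement_inv]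

theorem commutatorElement_commutatorElement_eq_one_of_mem_center {a b c : G}
    (ha : ⁅a, c⁆ ∈ center G) (hb : ⁅b, c⁆ ∈ center G) : ⁅⁅a, b⁆, c⁆ = 1 := by
  -- Conjugation by `c` multiplies `a` and `b` by central elements, which fixes `⁅a, b⁆`.
  have conj (x : G) : c * x * c⁻¹ = ⁅x, c⁆⁻¹ * x := by group
  have hfix : c * ⁅a, b⁆ * c⁻¹ = ⁅a, b⁆ := by
    rw [show c * ⁅a, b⁆ * c⁻¹ = ⁅c * a * c⁻¹, c * b * c⁻¹⁆ by group, conj, conj,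
      commutatorElement_mul_left_of_mem_center (inv_mem ha),
      commutatorElement_mul_right_of_mem_center (inv_mem hb)]
  exact commutatorElement_eq_one_iff_commute.mpr (mul_inv_eq_iff_eq_mul.mp hfix).symm

@[simps]
def commutatorHom (g : G) (hg : ∀ x, ⁅g, x⁆ ∈ center G) : G →* G where
  toFun x := ⁅g, x⁆
  map_one' := commutatorElement_one_right g
  map_mul' x y := by
    rw [show ⁅g, x * y⁆ = ⁅g, x⁆ * (x * ⁅g, y⁆ * x⁻¹) by group, mem_center_iff.mp (hg y) x,
      mul_inv_cancel_right]

theorem exists_commutatorElement_mul_zpow_eq_one (hG : ∀ x y : G, ⁅x, y⁆ ∈ center G) {a b c : G}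
    (hac : ⁅a, c⁆ ∈ zpowers ⁅a, b⁆) (hbc : ⁅b, c⁆ ∈ zpowers ⁅a, b⁆) :
    ∃ m n : ℤ, ⁅a, c * b ^ m * a ^ n⁆ = 1 ∧ ⁅b, c * b ^ m * a ^ n⁆ = 1 := by
  obtain ⟨m, hm⟩ := mem_zpowers_iff.mp hac
  obtain ⟨n, hn⟩ := mem_zpowers_iff.mp hbc
  refine ⟨-m, n, ?_, ?_⟩
  · change commutatorHom a (hG a) _ = 1
    simp only [map_mul, map_zpow, commutatorHom_apply, commutatorElement_self, one_zpow, mul_one,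
      ← hm, ← zpow_add, add_neg_cancel, zpow_zero]
  · change commutatorHom b (hG b) _ = 1
    simp only [map_mul, map_zpow, commutatorHom_apply, commutatorElement_self, one_zpow, mul_one,
      ← hn, ← commutatorElement_inv a b, inv_zpow, mul_inv_cancel]

theorem lowerCentralSeries_le_center {n : ℕ}
    (h : (⊤ : Subgroup G).lowerCentralSeries (n + 1) = ⊥) :
    (⊤ : Subgroup G).lowerCentralSeries n ≤ center G := by
  rwa [Subgroup.lowerCentralSeries_succ, commutator_eq_bot_iff_le_centralizer, coe_top,
    centralizer_univ] at h

theorem lowerCentralSeries_quotient_lowerCentralSeries (n : ℕ) :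
    (⊤ : Subgroup (G ⧸ (⊤ : Subgroup G).lowerCentralSeries n)).lowerCentralSeries n = ⊥ := by
  rw [← map_top_of_surjective _ (QuotientGroup.mk'_surjective _), ← map_lowerCentralSeries,
    QuotientGroup.map_mk'_self]

theorem commutatorElement_mem_center_quotient_lowerCentralSeries_two
    (x y : G ⧸ (⊤ : Subgroup G).lowerCentralSeries 2) : ⁅x, y⁆ ∈ center _ :=
  lowerCentralSeries_le_center (lowerCentralSeries_quotient_lowerCentralSeries 2)
    (commutator_mem_commutator (mem_top x) (mem_top y))

theorem QuotientGroup.mk_commutatorElement (N : Subgroup G) [N.Normal] (x y : G) :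
    ((⁅x, y⁆ : G) : G ⧸ N) = ⁅(x : G ⧸ N), (y : G ⧸ N)⁆ :=
  map_commutatorElement (QuotientGroup.mk' N) x y

end CentralCommutators

section Frattini

variable {G : Type*} [Group G] [Group.IsNilpotent G]

theorem commutator_le_of_isCoatom {M : Subgroup G} (hM : IsCoatom M) : commutator G ≤ M := by
  have := (Group.normalizerCondition_of_isNilpotent (G := G)).normal_of_coatom M hM
  obtain ⟨g, -, hg⟩ := SetLike.exists_of_lt (lt_top_iff_ne_top.mpr hM.1)
  have hsup : M ⊔ zpowers g = ⊤ :=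
    hM.2 _ (left_lt_sup.mpr fun h => hg (h (mem_zpowers g)))
  have : IsCyclic (G ⧸ M) := by
    refine isCyclic_iff_exists_zpowers_eq_top.mpr ⟨g, ?_⟩
    rw [← map_top_of_surjective _ (QuotientGroup.mk'_surjective M), ← hsup, Subgroup.map_sup,
      QuotientGroup.map_mk'_self, bot_sup_eq, MonoidHom.map_zpowers, QuotientGroup.mk'_apply]
  let := IsCyclic.commGroup (α := G ⧸ M)
  simpa using Abelianization.commutator_subset_ker (QuotientGroup.mk' M)

theorem commutator_le_frattini : commutator G ≤ frattini G :=
  le_iInf₂ fun _ => commutator_le_of_isCoatom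

theorem eq_top_of_sup_commutator_eq_top [Finite G] {K : Subgroup G} (h : K ⊔ commutator G = ⊤) :
    K = ⊤ :=
  frattini_nongenerating (top_le_iff.mp (h ▸ sup_le_sup_left commutator_le_frattini K))

end Frattini

theorem le_of_relIndex_prime {G : Type*} [Group G] {H K L : Subgroup G} (hHK : H ≤ K) (hKL : K ≤ L)
    (hp : (H.relIndex L).Prime) (hK : ¬K ≤ H) : L ≤ K := by
  rw [← relIndex_mul_relIndex H K L hHK hKL, Nat.prime_mul_iff] at hp
  rcases hp with ⟨-, h⟩ | ⟨-, h⟩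
  · exact relIndex_eq_one.mp h
  · exact absurd (relIndex_eq_one.mp h) hK

theorem IsPGroup.card_mul_dvd_card_of_lt {p : ℕ} [Fact p.Prime] {G : Type*} [Group G] [Finite G]
    (hP : IsPGroup p G) {S T : Subgroup G} (h : S < T) : Nat.card S * p ∣ Nat.card T := by
  obtain ⟨k, hk⟩ : ∃ k, S.relIndex T = p ^ k := (hP.to_subgroup T).index (S.subgroupOf T)
  have hk0 : k ≠ 0 := by
    rintro rfl
    exact h.not_ge (relIndex_eq_one.mp hk)
  have hcard := relIndex_mul_relIndex ⊥ S T bot_le h.le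
  rw [relIndex_bot_left, relIndex_bot_left, hk] at hcard
  exact hcard ▸ mul_dvd_mul_left _ (dvd_pow_self p hk0)

section LowerCentralSeries

variable {G : Type*} [Group G]

theorem exists_commutatorElement_notMem_and_le_zpowers_sup
    (hp : (((⊤ : Subgroup G).lowerCentralSeries 2).relIndex
      ((⊤ : Subgroup G).lowerCentralSeries 1)).Prime) :
    ∃ a b : G, ⁅a, b⁆ ∉ (⊤ : Subgroup G).lowerCentralSeries 2 ∧
      (⊤ : Subgroup G).lowerCentralSeries 1 ≤
        zpowers ⁅a, b⁆ ⊔ (⊤ : Subgroup G).lowerCentralSeries 2 := by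
  obtain ⟨a, b, hab⟩ : ∃ a b : G, ⁅a, b⁆ ∉ (⊤ : Subgroup G).lowerCentralSeries 2 := by
    by_contra! h
    refine hp.ne_one (relIndex_eq_one.mpr ?_)
    rw [top_lowerCentralSeries_one, commutator_def, commutator_le]
    exact fun x _ y _ => h x y
  refine ⟨a, b, hab, le_of_relIndex_prime le_sup_right (sup_le ?_ ?_) hp ?_⟩
  · exact zpowers_le.mpr (commutator_mem_commutator (mem_top a) (mem_top b))
  · exact Subgroup.lowerCentralSeries_antitone _ one_le_two
  · exact fun h => hab (h (mem_sup_left (mem_zpowers _)))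

theorem notMem_zpowers_sup_of_commutatorElement_notMem {a b : G}
    (hab : ⁅a, b⁆ ∉ (⊤ : Subgroup G).lowerCentralSeries 2) :
    b ∉ zpowers a ⊔ (⊤ : Subgroup G).lowerCentralSeries 1 := by
  set N := (⊤ : Subgroup G).lowerCentralSeries 2
  let φ := (commutatorHom (a : G ⧸ N)
    (commutatorElement_mem_center_quotient_lowerCentralSeries_two _)).comp (QuotientGroup.mk' N)
  have hφ (x : G) : x ∈ φ.ker ↔ ⁅a, x⁆ ∈ N := by
    rw [MonoidHom.mem_ker, ← QuotientGroup.eq_one_iff, QuotientGroup.mk_commutatorElement]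
    rfl
  have hker : zpowers a ⊔ (⊤ : Subgroup G).lowerCentralSeries 1 ≤ φ.ker := by
    refine sup_le (zpowers_le.mpr ((hφ a).mpr (by simp))) fun x hx => (hφ x).mpr ?_
    have : ⁅a, x⁆ ∈ ⁅⊤, (⊤ : Subgroup G).lowerCentralSeries 1⁆ :=
      commutator_mem_commutator (mem_top a) hx
    rwa [commutator_comm] at this
  exact fun hb => hab ((hφ b).mp (hker hb))

theorem exists_mul_zpow_commutatorElement_mem {a b : G}
    (h : (⊤ : Subgroup G).lowerCentralSeries 1 ≤
      zpowers ⁅a, b⁆ ⊔ (⊤ : Subgroup G).lowerCentralSeries 2) (c : G) :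
    ∃ m n : ℤ, ⁅a, c * b ^ m * a ^ n⁆ ∈ (⊤ : Subgroup G).lowerCentralSeries 2 ∧
      ⁅b, c * b ^ m * a ^ n⁆ ∈ (⊤ : Subgroup G).lowerCentralSeries 2 := by
  set N := (⊤ : Subgroup G).lowerCentralSeries 2
  have hmem (x y : G) : ⁅(x : G ⧸ N), (y : G ⧸ N)⁆ ∈ zpowers ⁅(a : G ⧸ N), (b : G ⧸ N)⁆ := by
    have := mem_map_of_mem (QuotientGroup.mk' N)
      (h (commutator_mem_commutator (mem_top x) (mem_top y)))
    rwa [Subgroup.map_sup, QuotientGroup.map_mk'_self, sup_bot_eq, MonoidHom.map_zpowers,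
      QuotientGroup.mk'_apply, QuotientGroup.mk'_apply, QuotientGroup.mk_commutatorElement,
      QuotientGroup.mk_commutatorElement] at this
  obtain ⟨m, n, ha, hb⟩ := exists_commutatorElement_mul_zpow_eq_one
    commutatorElement_mem_center_quotient_lowerCentralSeries_two (hmem a c) (hmem b c)
  refine ⟨m, n, ?_, ?_⟩ <;>
    rwa [← QuotientGroup.eq_one_iff, QuotientGroup.mk_commutatorElement, QuotientGroup.mk_mul,
      QuotientGroup.mk_mul, QuotientGroup.mk_zpow, QuotientGroup.mk_zpow]

theorem lowerCentralSeries_two_le_range_commutatorHom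
    (hcent : (⊤ : Subgroup G).lowerCentralSeries 2 ≤ center G) {u : G}
    (hu : u ∈ (⊤ : Subgroup G).lowerCentralSeries 1)
    (h : (⊤ : Subgroup G).lowerCentralSeries 1 ≤
      zpowers u ⊔ (⊤ : Subgroup G).lowerCentralSeries 2) :
    (⊤ : Subgroup G).lowerCentralSeries 2 ≤
      (commutatorHom u fun x => hcent (commutator_mem_commutator hu (mem_top x))).range := by
  set φ := commutatorHom u fun x => hcent (commutator_mem_commutator hu (mem_top x))
  have := normal_of_le_center (N := φ.range) (by
    rintro _ ⟨x, rfl⟩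
    exact hcent (commutator_mem_commutator hu (mem_top x)))
  -- `upperCentralSeriesStep φ.range` consists of the `g` with every `⁅g, x⁆` in `φ.range`.
  have hstep : (⊤ : Subgroup G).lowerCentralSeries 1 ≤
      Subgroup.upperCentralSeriesStep φ.range := by
    refine h.trans (sup_le (zpowers_le.mpr fun x => ⟨x, rfl⟩) fun z hz x => ?_)
    rw [commutatorElement_eq_one_iff_commute.mpr (mem_center_iff.mp (hcent hz) x).symm]
    exact one_mem _
  rw [Subgroup.lowerCentralSeries_succ, commutator_le]
  exact fun g hg x _ => hstep hg x

theorem lowerCentralSeries_two_le_closure_pair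
    (hcent : (⊤ : Subgroup G).lowerCentralSeries 2 ≤ center G) {a b c : G}
    (h : (⊤ : Subgroup G).lowerCentralSeries 1 ≤
      zpowers ⁅a, b⁆ ⊔ (⊤ : Subgroup G).lowerCentralSeries 2)
    (habc : closure {a, b, c} = ⊤) (hac : ⁅a, c⁆ ∈ (⊤ : Subgroup G).lowerCentralSeries 2)
    (hbc : ⁅b, c⁆ ∈ (⊤ : Subgroup G).lowerCentralSeries 2) :
    (⊤ : Subgroup G).lowerCentralSeries 2 ≤ (closure {a, b}).lowerCentralSeries 2 := by
  have hu : ⁅a, b⁆ ∈ (⊤ : Subgroup G).lowerCentralSeries 1 :=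
    commutator_mem_commutator (mem_top a) (mem_top b)
  set φ := commutatorHom ⁅a, b⁆ fun x => hcent (commutator_mem_commutator hu (mem_top x))
  refine (lowerCentralSeries_two_le_range_commutatorHom hcent hu h).trans ?_
  have ha : a ∈ closure {a, b} := subset_closure (by simp)
  have hb : b ∈ closure {a, b} := subset_closure (by simp)
  have hu' : ⁅a, b⁆ ∈ (closure {a, b}).lowerCentralSeries 1 := commutator_mem_commutator ha hb
  have hrange : φ.range = closure (φ '' {a, b, c}) := by
    rw [← MonoidHom.map_closure, habc, MonoidHom.range_eq_map]
  rw [hrange, closure_le]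
  rintro _ ⟨x, hx, rfl⟩
  rcases hx with rfl | rfl | rfl
  · exact commutator_mem_commutator hu' ha
  · exact commutator_mem_commutator hu' hb
  · rw [commutatorHom_apply,
      commutatorElement_commutatorElement_eq_one_of_mem_center (hcent hac) (hcent hbc)]
    exact one_mem _

theorem nilpotencyClass_eq_of_lowerCentralSeries_le [Group.IsNilpotent G] {H : Subgroup G}
    {n : ℕ} (hn : Group.nilpotencyClass G = n + 1)
    (h : (⊤ : Subgroup G).lowerCentralSeries n ≤ H.lowerCentralSeries n) :
    Group.nilpotencyClass H = n + 1 := by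
  refine le_antisymm (hn ▸ H.nilpotencyClass_le) (Nat.succ_le_of_lt (lt_of_not_ge fun hH => ?_))
  rw [lowerCentralSeries_eq_bot_of_nilpotencyClass_le hH, le_bot_iff,
    Subgroup.lowerCentralSeries_eq_bot_iff_nilpotencyClass_le] at h
  omega

section Finite

variable [Finite G] {p : ℕ} [Fact p.Prime]

theorem card_closure_pair_sup_lowerCentralSeries_one (hG : Nat.card G = p ^ 5)
    (hrel : ((⊤ : Subgroup G).lowerCentralSeries 2).relIndex
      ((⊤ : Subgroup G).lowerCentralSeries 1) = p)
    (hg3 : Nat.card ((⊤ : Subgroup G).lowerCentralSeries 2) = p) {a b : G}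
    (hab : ⁅a, b⁆ ∉ (⊤ : Subgroup G).lowerCentralSeries 2)
    (hM : closure {a, b} ⊔ (⊤ : Subgroup G).lowerCentralSeries 1 ≠ ⊤) :
    Nat.card (closure {a, b} ⊔ (⊤ : Subgroup G).lowerCentralSeries 1 : Subgroup G) = p ^ 4 := by
  have hP : IsPGroup p G := IsPGroup.of_card hG
  have hL1 : Nat.card ((⊤ : Subgroup G).lowerCentralSeries 1) = p ^ 2 := by
    have := relIndex_mul_relIndex ⊥ _ _ bot_le
      ((⊤ : Subgroup G).lowerCentralSeries_antitone one_le_two)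
    rwa [relIndex_bot_left, relIndex_bot_left, hg3, hrel, ← sq, eq_comm] at this
  have hA : (⊤ : Subgroup G).lowerCentralSeries 1 <
      zpowers a ⊔ (⊤ : Subgroup G).lowerCentralSeries 1 :=
    right_lt_sup.mpr fun h => hab (commutator_mem_commutator (h (mem_zpowers a)) (mem_top b))
  have hAM : zpowers a ⊔ (⊤ : Subgroup G).lowerCentralSeries 1 <
      closure {a, b} ⊔ (⊤ : Subgroup G).lowerCentralSeries 1 := by
    refine lt_of_le_of_ne (sup_le_sup_right (zpowers_le.mpr (subset_closure (by simp))) _)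
      fun he => notMem_zpowers_sup_of_commutatorElement_notMem hab ?_
    exact he ▸ mem_sup_left (subset_closure (by simp))
  have hdvd : p ^ 4 ∣ Nat.card (closure {a, b} ⊔ (⊤ : Subgroup G).lowerCentralSeries 1 :
      Subgroup G) :=
    calc p ^ 4 = p ^ 2 * p * p := by ring
      _ ∣ _ := mul_dvd_mul_right (hL1 ▸ hP.card_mul_dvd_card_of_lt hA) p
      _ ∣ _ := hP.card_mul_dvd_card_of_lt hAM
  have htop := hP.card_mul_dvd_card_of_lt (lt_top_iff_ne_top.mpr hM)
  rw [card_top, hG, pow_succ] at htop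
  exact Nat.dvd_antisymm (Nat.dvd_of_mul_dvd_mul_right (Fact.out : p.Prime).pos htop) hdvd

theorem closure_triple_eq_top [Group.IsNilpotent G] (hG : Nat.card G = p ^ 5) {a b c : G}
    (hM : Nat.card (closure {a, b} ⊔ (⊤ : Subgroup G).lowerCentralSeries 1 : Subgroup G) = p ^ 4)
    (hc : c ∉ closure {a, b} ⊔ (⊤ : Subgroup G).lowerCentralSeries 1) :
    closure {a, b, c} = ⊤ := by
  have hindex : (closure {a, b} ⊔ (⊤ : Subgroup G).lowerCentralSeries 1).index = p := by
    have := card_mul_index (closure {a, b} ⊔ (⊤ : Subgroup G).lowerCentralSeries 1)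
    rw [hM, hG, pow_succ] at this
    exact Nat.eq_of_mul_eq_mul_left (pow_pos (Fact.out : p.Prime).pos 4) this
  refine eq_top_of_sup_commutator_eq_top (top_le_iff.mp (le_of_relIndex_prime ?_ le_top
    (by rw [relIndex_top_right, hindex]; exact Fact.out) ?_))
  · rw [← top_lowerCentralSeries_one]
    exact sup_le_sup_right
      (Subgroup.closure_mono fun x hx => by rcases hx with rfl | rfl <;> simp) _
  · exact fun h => hc (h (mem_sup_left (subset_closure (by simp))))

end Finite

end LowerCentralSeries

theorem stmt19_general {G : Type*} [Group G] (p : ℕ) (hp : p.Prime)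
    (hG : Nat.card G = p ^ 5) [Group.IsNilpotent G]
    (hclass : Group.nilpotencyClass G = 3)
    (hgen : ∀ a b : G, Subgroup.closure {a, b} ≠ ⊤)
    (hrel : ((⊤ : Subgroup G).lowerCentralSeries 2).relIndex ((⊤ : Subgroup G).lowerCentralSeries 1) = p)
    (hg3 : Nat.card ((⊤ : Subgroup G).lowerCentralSeries 2) = p) :
    ∃ a b c : G, Subgroup.closure {a, b, c} = ⊤ ∧
      ⁅a, c⁆ ∈ (⊤ : Subgroup G).lowerCentralSeries 2 ∧ ⁅b, c⁆ ∈ (⊤ : Subgroup G).lowerCentralSeries 2 ∧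
      Nat.card ↥(Subgroup.closure {a, b}) = p ^ 4 ∧
      Group.nilpotencyClass ↥(Subgroup.closure {a, b}) = 3 := by
  have : Fact p.Prime := ⟨hp⟩
  have : Finite G := Nat.finite_of_card_ne_zero (hG ▸ pow_ne_zero 5 hp.ne_zero)
  have hL3 : (⊤ : Subgroup G).lowerCentralSeries 3 = ⊥ :=
    hclass ▸ Subgroup.lowerCentralSeries_nilpotencyClass
  have hcent := lowerCentralSeries_le_center hL3
  obtain ⟨a, b, hab, hL1⟩ := exists_commutatorElement_notMem_and_le_zpowers_sup (hrel ▸ hp)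
  have ha : a ∈ closure {a, b} := subset_closure (by simp)
  have hb : b ∈ closure {a, b} := subset_closure (by simp)
  set M := closure {a, b} ⊔ (⊤ : Subgroup G).lowerCentralSeries 1
  have hM : M ≠ ⊤ := fun h =>
    hgen a b (eq_top_of_sup_commutator_eq_top (top_lowerCentralSeries_one (G := G) ▸ h))
  have hcardM := card_closure_pair_sup_lowerCentralSeries_one hG hrel hg3 hab hM
  obtain ⟨c₀, -, hc₀⟩ := SetLike.exists_of_lt (lt_top_iff_ne_top.mpr hM)
  obtain ⟨m, n, hac, hbc⟩ := exists_mul_zpow_commutatorElement_mem hL1 c₀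
  have hc : c₀ * b ^ m * a ^ n ∉ M := by
    rwa [mul_assoc, mul_mem_cancel_right
      (mul_mem (zpow_mem (mem_sup_left hb) m) (zpow_mem (mem_sup_left ha) n))]
  have habc := closure_triple_eq_top hG hcardM hc
  have hL2 := lowerCentralSeries_two_le_closure_pair hcent hL1 habc hac hbc
  have hL1H : (⊤ : Subgroup G).lowerCentralSeries 1 ≤ closure {a, b} :=
    hL1.trans (sup_le (zpowers_le.mpr (lowerCentralSeries_le_self _ 1
      (commutator_mem_commutator ha hb))) (hL2.trans (lowerCentralSeries_le_self _ 2)))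
  exact ⟨a, b, _, habc, hac, hbc, sup_eq_left.mpr hL1H ▸ hcardM,
    nilpotencyClass_eq_of_lowerCentralSeries_le hclass hL2⟩

theorem stmt19 {G : Type*} [Group G] (p : ℕ) (hp : p.Prime) (hodd : Odd p)
    (hG : Nat.card G = p ^ 5) [Group.IsNilpotent G]
    (hclass : Group.nilpotencyClass G = 3)
    (hgen : ∀ a b : G, Subgroup.closure {a, b} ≠ ⊤)
    (hrel : ((⊤ : Subgroup G).lowerCentralSeries 2).relIndex ((⊤ : Subgroup G).lowerCentralSeries 1) = p)
    (hg3 : Nat.card ((⊤ : Subgroup G).lowerCentralSeries 2) = p) :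
    ∃ a b c : G, Subgroup.closure {a, b, c} = ⊤ ∧
      ⁅a, c⁆ ∈ (⊤ : Subgroup G).lowerCentralSeries 2 ∧ ⁅b, c⁆ ∈ (⊤ : Subgroup G).lowerCentralSeries 2 ∧
      Nat.card ↥(Subgroup.closure {a, b}) = p ^ 4 ∧
      Group.nilpotencyClass ↥(Subgroup.closure {a, b}) = 3 :=
  stmt19_general p hp hG hclass hgen hrel hg3
end
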